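/- arXiv:2407.00103 — 6 statements merged into one kernel-verified Lean document; each statement's English description precedes it below -/
import Mathlib

section
/- If G is a finite connected simple graph with at least two vertices and D is a dominating set of G of minimum cardinality, then the complement V \ D is also a dominating set of G. -/
/-! If a vertex `v` of a minimum dominating set `D` had all its neighbours in `D`, then `D \ {v}`
would still dominate: `v` itself by any of its neighbours (one exists by connectivity), and every
other vertex outside `D` by its old dominator, which cannot be `v`. This contradicts minimality. -/

/-- `S` is a dominating set of `G`: every vertex outside `S` has a neighbor in `S`. -/
def IsDominating {V : Type*} (G : SimpleGraph V) (S : Set V) : Prop :=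
  ∀ v, v ∉ S → ∃ u ∈ S, G.Adj v u

/-- A domatic partition of `G`: a partition of the vertex set into
(pairwise disjoint, nonempty) dominating sets. -/
def IsDomaticPartition {V : Type*} (G : SimpleGraph V) (P : Set (Set V)) : Prop :=
  Setoid.IsPartition P ∧ ∀ S ∈ P, IsDominating G S

/-- `dp G i` is the number of domatic partitions of `G` with exactly `i` parts. -/
noncomputable def dp {V : Type*} (G : SimpleGraph V) (i : ℕ) : ℕ :=
  {P : Set (Set V) | IsDomaticPartition G P ∧ P.ncard = i}.ncard

theorem IsDominating.diff_singleton_of_neighborSet_subset {V : Type*} {G : SimpleGraph V}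
    {D : Set V} {v w : V} (hD : IsDominating G D) (hnbhd : G.neighborSet v ⊆ D)
    (hw : G.Adj v w) : IsDominating G (D \ {v}) := by
  intro u hu
  rcases eq_or_ne u v with rfl | huv
  · exact ⟨w, ⟨hnbhd hw, hw.ne'⟩, hw⟩
  · have huD : u ∉ D := fun h => hu ⟨h, huv⟩
    obtain ⟨z, hzD, huz⟩ := hD u huD
    refine ⟨z, ⟨hzD, ?_⟩, huz⟩
    rintro rfl
    exact huD (hnbhd huz.symm)

/-- In a finite connected graph on at least two vertices, the complement of a
minimum dominating set is again a dominating set. -/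
theorem compl_of_min_dominating_isDominating
    {V : Type*} [Fintype V] (G : SimpleGraph V) (hconn : G.Connected)
    (hcard : 1 < Fintype.card V) (D : Set V) (hD : IsDominating G D)
    (hmin : ∀ D' : Set V, IsDominating G D' → D.ncard ≤ D'.ncard) :
    IsDominating G Dᶜ := by
  intro v hv
  rw [Set.notMem_compl_iff] at hv
  by_contra! hno
  have hnbhd : G.neighborSet v ⊆ D := fun u huv => by_contra fun hu => hno u hu huv
  have : Nontrivial V := Fintype.one_lt_card_iff_nontrivial.mp hcard
  obtain ⟨w, hw⟩ := hconn.preconnected.exists_adj_of_nontrivial v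
  have hsmaller : (D \ {v}).ncard < D.ncard := Set.ncard_sdiff_singleton_lt_of_mem hv D.toFinite
  exact (hmin _ (hD.diff_singleton_of_neighborSet_subset hnbhd hw)).not_gt hsmaller
end

section
/- Let T be a finite tree of order n ≥ 4 and let y be a quasi-star vertex of T, i.e., y is adjacent to exactly one non-leaf vertex and to at least one leaf. Let ones(y) be the set of leaves adjacent to y, let T₁ be the subgraph of T induced on V \ ones(y), and let T₂ be the subgraph of T induced on V \ (ones(y) ∪ {y}). Then dp(T,2) = dp(T₁,2) + dp(T₂,2). -/
/-!
Record a 2-domatic partition by its part `A` avoiding `y`. Since `A` dominates `y`'s leaves and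
their only neighbour is `y ∉ A`, all of `ones(y)` lies in `A`, so only the rest of `A` is free.
Let `w` be the unique non-leaf neighbour of `y`. If `w ∈ A`, deleting `ones(y)` gives a
2-domatic partition of `T₁` (there `y` is dominated by `w`); if `w ∉ A`, deleting also `y`
gives one of `T₂`, because the only neighbour of `y` in `T₂` is `w`, which lies on `y`'s side.
Both correspondences are bijective, since `A` is recovered by adding `ones(y)` back.
-/

lemma Setoid.isPartition_pair_compl {α : Type*} {A : Set α} (hA : A.Nonempty)
    (hAc : Aᶜ.Nonempty) : Setoid.IsPartition {A, Aᶜ} := by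
  refine Set.PairwiseDisjoint.isPartition_of_exists_of_ne_empty ?_ (fun a => ?_) ?_
  · exact Set.pairwise_pair.2 fun _ => ⟨disjoint_compl_right, disjoint_compl_left⟩
  · by_cases ha : a ∈ A
    exacts [⟨A, by simp, ha⟩, ⟨Aᶜ, by simp, ha⟩]
  · rintro (h | h)
    exacts [hA.ne_empty h.symm, hAc.ne_empty h.symm]

lemma Setoid.IsPartition.eq_compl_of_pair {α : Type*} {A B : Set α}
    (hP : Setoid.IsPartition {A, B}) (hAB : A ≠ B) : B = Aᶜ := by
  have hdisj : Disjoint A B := hP.pairwiseDisjoint (by simp) (by simp) hAB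
  have hcover : A ∪ B = Set.univ := by simpa using hP.sUnion_eq_univ
  exact (IsCompl.compl_eq ⟨hdisj, codisjoint_iff.2 hcover⟩).symm

lemma Set.ncard_setOf_eq_of_diff_eq {α : Type*} {s C : Set α} (hC : Disjoint C s)
    {P : Set α → Prop} {Q : Set s → Prop} (hP : ∀ A, P A → A \ s = C)
    (hPQ : ∀ A, A \ s = C → (P A ↔ Q (Subtype.val ⁻¹' A))) :
    {A | P A}.ncard = {A' | Q A'}.ncard := by
  refine Set.ncard_congr (fun A _ => Subtype.val ⁻¹' A) ?_ ?_ ?_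
  · exact fun A hA => (hPQ A (hP A hA)).1 hA
  · intro A B hA hB hAB
    rw [← Set.inter_union_sdiff A s, ← Set.inter_union_sdiff B s, hP A hA, hP B hB,
      Set.inter_comm, Set.inter_comm B, ← Subtype.image_preimage_coe,
      ← Subtype.image_preimage_coe]
    exact congrArg (fun A' : Set s => Subtype.val '' A' ∪ C) hAB
  · intro A' hA'
    have hpre : Subtype.val ⁻¹' (Subtype.val '' A' ∪ C) = A' := by
      ext v
      simpa using fun hv => absurd hv (hC.notMem_of_mem_right v.2)
    have hdiff : (Subtype.val '' A' ∪ C) \ s = C := by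
      rw [Set.union_sdiff_distrib, hC.sdiff_eq_left, Set.sdiff_eq_empty.2 (by simp),
        Set.empty_union]
    exact ⟨_, (hPQ _ hdiff).2 (by rwa [hpre]), hpre⟩

section Domination

variable {V : Type*} {G : SimpleGraph V}

lemma IsDominating.nonempty {A : Set V} {z : V} (hA : IsDominating G A) (hz : z ∉ A) :
    A.Nonempty :=
  let ⟨u, hu, _⟩ := hA z hz
  ⟨u, hu⟩

lemma isDominating_iff_induce {s A : Set V}
    (hout : ∀ v ∉ s, v ∉ A → ∃ u ∈ A, G.Adj v u)
    (hin : ∀ v ∈ s, v ∉ A → ∀ u ∈ A, u ∉ s → G.Adj v u → ∃ u' ∈ s, u' ∈ A ∧ G.Adj v u') :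
    IsDominating G A ↔ IsDominating (G.induce s) (Subtype.val ⁻¹' A) := by
  constructor
  · rintro hA ⟨v, hv⟩ hvA
    obtain ⟨u, huA, hvu⟩ := hA v hvA
    by_cases hu : u ∈ s
    · exact ⟨⟨u, hu⟩, huA, hvu⟩
    · obtain ⟨u', hu', hu'A, hvu'⟩ := hin v hv hvA u huA hu hvu
      exact ⟨⟨u', hu'⟩, hu'A, hvu'⟩
  · intro hA v hvA
    by_cases hv : v ∈ s
    · obtain ⟨u, huA, hvu⟩ := hA ⟨v, hv⟩ hvA
      exact ⟨u, huA, hvu⟩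
    · exact hout v hv hvA

/-- A domatic partition `{A, Aᶜ}` is recorded by its part `A` avoiding the vertex `z`. -/
def domaticPartsAvoiding (G : SimpleGraph V) (z : V) : Set (Set V) :=
  {A | z ∉ A ∧ IsDominating G A ∧ IsDominating G Aᶜ}

lemma dp_two_eq_ncard_domaticPartsAvoiding (z : V) :
    dp G 2 = (domaticPartsAvoiding G z).ncard := by
  symm
  refine Set.ncard_congr (fun A _ => ({A, Aᶜ} : Set (Set V))) ?_ ?_ ?_
  · rintro A ⟨hz, hA, hAc⟩
    have hne : A ≠ Aᶜ := fun h => hz (h ▸ (show z ∈ Aᶜ from hz))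
    refine ⟨⟨Setoid.isPartition_pair_compl (hA.nonempty hz) ⟨z, hz⟩, ?_⟩, Set.ncard_pair hne⟩
    rintro S (rfl | rfl) <;> assumption
  · rintro A B ⟨hzA, -⟩ ⟨hzB, -⟩ hAB
    have hA : A ∈ ({B, Bᶜ} : Set (Set V)) := hAB ▸ Set.mem_insert _ _
    rcases hA with rfl | rfl
    · rfl
    · exact absurd (not_not.1 hzA) hzB
  · rintro P ⟨⟨hP, hdom⟩, hcard⟩
    obtain ⟨A, B, hAB, rfl⟩ := Set.ncard_eq_two.1 hcard
    obtain rfl := hP.eq_compl_of_pair hAB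
    by_cases hz : z ∈ A
    · refine ⟨Aᶜ, ⟨not_not.2 hz, hdom _ (by simp), ?_⟩, by simp [Set.pair_comm]⟩
      simpa using hdom A (by simp)
    · exact ⟨A, ⟨hz, hdom _ (by simp), hdom _ (by simp)⟩, rfl⟩

end Domination

section QuasiStar

variable {V : Type*} [Fintype V] {G : SimpleGraph V} [DecidableRel G.Adj] {y w : V}

variable (G) in
/-- The leaves adjacent to `y`, written `ones(y)` in the paper. -/
def ones (y : V) : Set V :=
  {v | G.Adj y v ∧ G.degree v = 1}

lemma notMem_ones_self : y ∉ ones G y :=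
  fun h => G.irrefl h.1

lemma eq_of_mem_ones_of_adj {v u : V} (hv : v ∈ ones G y) (hvu : G.Adj v u) : u = y :=
  (SimpleGraph.degree_eq_one_iff_existsUnique_adj.1 hv.2).unique hvu hv.1.symm

lemma ones_subset_of_mem_domaticPartsAvoiding {A : Set V} (hA : A ∈ domaticPartsAvoiding G y) :
    ones G y ⊆ A := by
  intro v hv
  by_contra hvA
  obtain ⟨u, huA, hvu⟩ := hA.2.1 v hvA
  exact hA.1 (eq_of_mem_ones_of_adj hv hvu ▸ huA)

lemma diff_compl_ones_of_mem_domaticPartsAvoiding {A : Set V}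
    (hA : A ∈ domaticPartsAvoiding G y) : A \ (ones G y)ᶜ = ones G y := by
  rw [Set.sdiff_compl, Set.inter_eq_right.2 (ones_subset_of_mem_domaticPartsAvoiding hA)]

lemma diff_compl_ones_diff_of_mem_domaticPartsAvoiding {A : Set V}
    (hA : A ∈ domaticPartsAvoiding G y) : A \ ((ones G y)ᶜ \ {y}) = ones G y := by
  have hones := ones_subset_of_mem_domaticPartsAvoiding hA
  ext v
  by_cases hvy : v = y
  · rw [hvy]
    simp [hA.1, notMem_ones_self (G := G)]
  · simpa [hvy] using @hones v

variable (hyw : G.Adj y w) (hw : w ∉ ones G y) (hw_unique : ∀ u, G.Adj y u → u ∉ ones G y → u = w)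
include hyw hw hw_unique

lemma mem_domaticPartsAvoiding_and_mem_iff {A : Set V} (hA : A \ (ones G y)ᶜ = ones G y) :
    A ∈ domaticPartsAvoiding G y ∧ w ∈ A ↔
      Subtype.val ⁻¹' A ∈ domaticPartsAvoiding (G.induce (ones G y)ᶜ) ⟨y, notMem_ones_self⟩ := by
  have hones : ones G y ⊆ A := hA ▸ Set.sdiff_subset
  have htransfer (hyA : y ∉ A) (hwA : w ∈ A) :
      (IsDominating G A ↔ IsDominating (G.induce (ones G y)ᶜ) (Subtype.val ⁻¹' A)) ∧
      (IsDominating G Aᶜ ↔ IsDominating (G.induce (ones G y)ᶜ) (Subtype.val ⁻¹' Aᶜ)) := by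
    refine ⟨isDominating_iff_induce ?_ ?_, isDominating_iff_induce ?_ ?_⟩
    · exact fun v hv hvA => absurd (hones (not_not.1 hv)) hvA
    · intro v _ _ u _ hu hvu
      obtain rfl := eq_of_mem_ones_of_adj (not_not.1 hu) hvu.symm
      exact ⟨w, hw, hwA, hyw⟩
    · intro v hv _
      exact ⟨y, hyA, (not_not.1 hv).1.symm⟩
    · exact fun v _ _ u huA hu _ => absurd (hones (not_not.1 hu)) huA
  constructor
  · rintro ⟨⟨hyA, hdom, hdomc⟩, hwA⟩
    exact ⟨hyA, (htransfer hyA hwA).1.1 hdom, (htransfer hyA hwA).2.1 hdomc⟩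
  · rintro ⟨hyA, hdom, hdomc⟩
    have hwA : w ∈ A := by
      obtain ⟨⟨u, hu⟩, huA, hyu⟩ := hdom _ hyA
      exact hw_unique u hyu hu ▸ huA
    exact ⟨⟨hyA, (htransfer hyA hwA).1.2 hdom, (htransfer hyA hwA).2.2 hdomc⟩, hwA⟩

lemma mem_domaticPartsAvoiding_and_notMem_iff {l : V} (hl : l ∈ ones G y) {A : Set V}
    (hA : A \ ((ones G y)ᶜ \ {y}) = ones G y) :
    A ∈ domaticPartsAvoiding G y ∧ w ∉ A ↔
      Subtype.val ⁻¹' A ∈ domaticPartsAvoiding (G.induce ((ones G y)ᶜ \ {y}))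
        ⟨w, hw, hyw.ne'⟩ := by
  have hones : ones G y ⊆ A := hA ▸ Set.sdiff_subset
  have hyA : y ∉ A := fun hyA =>
    notMem_ones_self (G := G) (by rw [← hA]; exact ⟨hyA, fun h => h.2 rfl⟩)
  have htransfer (hwA : w ∉ A) :
      (IsDominating G A ↔ IsDominating (G.induce ((ones G y)ᶜ \ {y})) (Subtype.val ⁻¹' A)) ∧
      (IsDominating G Aᶜ ↔
        IsDominating (G.induce ((ones G y)ᶜ \ {y})) (Subtype.val ⁻¹' Aᶜ)) := by
    refine ⟨isDominating_iff_induce ?_ ?_, isDominating_iff_induce ?_ ?_⟩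
    · intro v hv hvA
      obtain rfl : v = y := by_contra fun hvy => hv ⟨fun h => hvA (hones h), hvy⟩
      exact ⟨l, hones hl, hl.1⟩
    · intro v hv _ u huA hu hvu
      have hu' : u ∈ ones G y := by_contra fun h => hu ⟨h, fun huy => hyA (huy ▸ huA)⟩
      exact absurd (eq_of_mem_ones_of_adj hu' hvu.symm) hv.2
    · intro v hv hvA
      have hv' : v ∈ ones G y := by_contra fun h => hv ⟨h, fun hvy => hyA (hvy ▸ not_not.1 hvA)⟩
      exact ⟨y, hyA, hv'.1.symm⟩
    · intro v hv hvA u huA hu hvu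
      obtain rfl : u = y := by_contra fun huy => hu ⟨fun h => huA (hones h), huy⟩
      obtain rfl := hw_unique v hvu.symm hv.1
      exact absurd (not_not.1 hvA) hwA
  constructor
  · rintro ⟨⟨-, hdom, hdomc⟩, hwA⟩
    exact ⟨hwA, (htransfer hwA).1.1 hdom, (htransfer hwA).2.1 hdomc⟩
  · rintro ⟨hwA, hdom, hdomc⟩
    exact ⟨⟨hyA, (htransfer hwA).1.2 hdom, (htransfer hwA).2.2 hdomc⟩, hwA⟩

end QuasiStar

theorem dp_two_quasi_star_recurrence_general
    {V : Type*} [Fintype V] (G : SimpleGraph V) [DecidableRel G.Adj]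
    (y : V)
    (hquasi₁ : ∃! w, G.Adj y w ∧ G.degree w ≠ 1)
    (hquasi₂ : ∃ u, G.Adj y u ∧ G.degree u = 1) :
    dp G 2 =
      dp (G.induce {v | ¬ (G.Adj y v ∧ G.degree v = 1)}) 2 +
        dp (G.induce {v | ¬ (G.Adj y v ∧ G.degree v = 1) ∧ v ≠ y}) 2 := by
  obtain ⟨w, ⟨hyw, hw_deg⟩, hw_uniq⟩ := hquasi₁
  obtain ⟨l, hl⟩ := hquasi₂
  have hw : w ∉ ones G y := fun h => hw_deg h.2
  have hw_unique : ∀ u, G.Adj y u → u ∉ ones G y → u = w :=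
    fun u hu hu' => hw_uniq u ⟨hu, fun h => hu' ⟨hu, h⟩⟩
  change dp G 2 = dp (G.induce (ones G y)ᶜ) 2 + dp (G.induce ((ones G y)ᶜ \ {y})) 2
  rw [dp_two_eq_ncard_domaticPartsAvoiding y, dp_two_eq_ncard_domaticPartsAvoiding ⟨y, _⟩,
    dp_two_eq_ncard_domaticPartsAvoiding ⟨w, hw, hyw.ne'⟩,
    ← Set.ncard_inter_add_ncard_sdiff_eq_ncard _ {A | w ∈ A} (Set.toFinite _)]
  congr 1
  · exact Set.ncard_setOf_eq_of_diff_eq disjoint_compl_right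
      (fun A hA => diff_compl_ones_of_mem_domaticPartsAvoiding hA.1)
      (fun A hA => mem_domaticPartsAvoiding_and_mem_iff hyw hw hw_unique hA)
  · exact Set.ncard_setOf_eq_of_diff_eq (disjoint_compl_right.mono_right Set.sdiff_subset)
      (fun A hA => diff_compl_ones_diff_of_mem_domaticPartsAvoiding hA.1)
      (fun A hA => mem_domaticPartsAvoiding_and_notMem_iff hyw hw hw_unique hl hA)

/-- Recurrence for the number of 2-part domatic partitions of a tree at a
quasi-star vertex `y` (a vertex adjacent to exactly one non-leaf and to at
least one leaf): `dp T 2 = dp T₁ 2 + dp T₂ 2`, where `T₁` is induced on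
`V \ ones(y)` and `T₂` on `V \ (ones(y) ∪ {y})`. -/
theorem dp_two_quasi_star_recurrence
    {V : Type*} [Fintype V] (G : SimpleGraph V) [DecidableRel G.Adj]
    (hT : G.IsTree) (hn : 4 ≤ Fintype.card V) (y : V)
    (hquasi₁ : ∃! w, G.Adj y w ∧ G.degree w ≠ 1)
    (hquasi₂ : ∃ u, G.Adj y u ∧ G.degree u = 1) :
    dp G 2 =
      dp (G.induce {v | ¬ (G.Adj y v ∧ G.degree v = 1)}) 2 +
        dp (G.induce {v | ¬ (G.Adj y v ∧ G.degree v = 1) ∧ v ≠ y}) 2 :=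
  dp_two_quasi_star_recurrence_general G y hquasi₁ hquasi₂
end

section
/- For every integer n ≥ 4, the number of domatic partitions of the path P_n with exactly 2 parts satisfies the Fibonacci recurrence dp(P_n,2) = dp(P_{n-1},2) + dp(P_{n-2},2), with initial values dp(P_2,2) = dp(P_3,2) = 1. -/
/-!
A two-part domatic partition `{S, Sᶜ}` is the same thing as a two-colouring in which every vertex
has a neighbour of the other colour; fixing the colour of one vertex makes the correspondence
bijective. On the path `0, …, n-1` such a colouring gives `n-2` and `n-1` different colours, so it
is determined by its restriction to `0, …, n-2`. That restriction is again such a colouring unless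
`n-3` and `n-2` have the same colour, and then the restriction to `0, …, n-3` is one. Hence the
counts satisfy the Fibonacci recurrence, and `dp (pathGraph (k + 1)) 2 = fib k`.
-/

open SimpleGraph

variable {V : Type*}

def HasOppositeNeighbor (G : SimpleGraph V) (c : V → Bool) (v : V) : Prop :=
  ∃ u, G.Adj v u ∧ c u ≠ c v

def IsDomaticTwoColoring (G : SimpleGraph V) (c : V → Bool) : Prop :=
  ∀ v, HasOppositeNeighbor G c v

def domaticTwoColorings (G : SimpleGraph V) (v₀ : V) : Set (V → Bool) :=
  {c | c v₀ = true ∧ IsDomaticTwoColoring G c}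

lemma isDominating_and_isDominating_compl_iff (G : SimpleGraph V) (c : V → Bool) :
    IsDominating G {v | c v = true} ∧ IsDominating G {v | c v = true}ᶜ ↔
      IsDomaticTwoColoring G c := by
  constructor
  · rintro ⟨hS, hSc⟩ v
    cases hv : c v
    · obtain ⟨u, hu, huv⟩ := hS v (by simp [hv])
      exact ⟨u, huv, by simp_all⟩
    · obtain ⟨u, hu, huv⟩ := hSc v (by simp [hv])
      exact ⟨u, huv, by simp_all⟩
  · intro h
    constructor <;>
    · intro v hv
      obtain ⟨u, huv, hne⟩ := h v
      exact ⟨u, by simp_all, huv⟩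

lemma Setoid.isPartition_pair_compl_s8 {S : Set V} (hS : S.Nonempty) (hSc : Sᶜ.Nonempty) :
    Setoid.IsPartition {S, Sᶜ} := by
  refine Set.PairwiseDisjoint.isPartition_of_exists_of_ne_empty
    (Set.pairwise_pair_of_symm.mpr fun _ => disjoint_compl_right) (fun a => ?_) ?_
  · by_cases ha : a ∈ S
    exacts [⟨S, by simp, ha⟩, ⟨Sᶜ, by simp, ha⟩]
  · rintro (h | h)
    exacts [hS.ne_empty h.symm, hSc.ne_empty (Set.mem_singleton_iff.mp h).symm]

lemma Setoid.IsPartition.exists_mem_eq_pair_compl {P : Set (Set V)} (hP : Setoid.IsPartition P)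
    (h₂ : P.ncard = 2) (v₀ : V) : ∃ S, v₀ ∈ S ∧ P = {S, Sᶜ} := by
  obtain ⟨S, T, hST, rfl⟩ := Set.ncard_eq_two.mp h₂
  have hdisj : Disjoint S T := hP.pairwiseDisjoint (by simp) (by simp) hST
  have hcover : S ∪ T = Set.univ := by simpa using hP.sUnion_eq_univ
  obtain rfl : Sᶜ = T := IsCompl.compl_eq ⟨hdisj, codisjoint_iff.mpr hcover⟩
  by_cases hv₀ : v₀ ∈ S
  exacts [⟨S, hv₀, rfl⟩, ⟨Sᶜ, hv₀, by rw [compl_compl, Set.pair_comm]⟩]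

theorem dp_two_eq_ncard_domaticTwoColorings (G : SimpleGraph V) (v₀ : V) :
    dp G 2 = (domaticTwoColorings G v₀).ncard := by
  have : Nonempty V := ⟨v₀⟩
  symm
  refine Set.ncard_congr (fun c _ => {{v | c v = true}, {v | c v = true}ᶜ}) ?_ ?_ ?_
  · rintro c ⟨hc₀, hc⟩
    obtain ⟨u, -, hu⟩ := hc v₀
    have hdom := (isDominating_and_isDominating_compl_iff G c).mpr hc
    refine ⟨⟨Setoid.isPartition_pair_compl_s8 ⟨v₀, hc₀⟩ ⟨u, by simp_all⟩, ?_⟩,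
      Set.ncard_pair ne_compl_self⟩
    rintro S (rfl | rfl)
    exacts [hdom.1, hdom.2]
  · rintro c c' ⟨hc₀, -⟩ ⟨hc₀', -⟩ h
    have hmem : {v | c v = true} ∈ ({{v | c' v = true}, {v | c' v = true}ᶜ} : Set (Set V)) :=
      h ▸ Set.mem_insert _ _
    obtain hS | hS := hmem
    · funext v
      exact Bool.eq_iff_iff.mpr (Set.ext_iff.mp hS v)
    · exact absurd (hS ▸ hc₀ : v₀ ∈ {v | c' v = true}ᶜ) (by simpa using hc₀')
  · rintro P ⟨⟨hP, hdom⟩, h₂⟩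
    obtain ⟨S, hv₀, rfl⟩ := hP.exists_mem_eq_pair_compl h₂ v₀
    classical
    have hS : {v | decide (v ∈ S) = true} = S := by simp
    refine ⟨fun v => decide (v ∈ S), ⟨by simpa using hv₀, ?_⟩, by rw [hS]⟩
    rw [← isDominating_and_isDominating_compl_iff, hS]
    exact ⟨hdom S (by simp), hdom Sᶜ (by simp)⟩

namespace Fin

variable {n : ℕ}

def snocFlip (d : Fin (n + 1) → Bool) : Fin (n + 2) → Bool :=
  snoc d (!d (last n))

def snocRepeat (d : Fin (n + 1) → Bool) : Fin (n + 2) → Bool :=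
  snoc d (d (last n))

@[simp]
lemma init_snocFlip (d : Fin (n + 1) → Bool) : init (snocFlip d) = d :=
  init_snoc _ _

@[simp]
lemma init_snocRepeat (d : Fin (n + 1) → Bool) : init (snocRepeat d) = d :=
  init_snoc _ _

@[simp]
lemma snocFlip_zero (d : Fin (n + 1) → Bool) : snocFlip d 0 = d 0 :=
  snoc_castSucc (α := fun _ => Bool) _ _ 0

@[simp]
lemma snocRepeat_zero (d : Fin (n + 1) → Bool) : snocRepeat d 0 = d 0 :=
  snoc_castSucc (α := fun _ => Bool) _ _ 0

@[simp]
lemma init_zero (c : Fin (n + 2) → Bool) : init c 0 = c 0 :=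
  rfl

lemma snocFlip_init {c : Fin (n + 2) → Bool} (h : c (last n).castSucc ≠ c (last (n + 1))) :
    snocFlip (init c) = c := by
  conv_rhs => rw [← snoc_init_self c, Bool.eq_not_of_ne h.symm]
  rfl

lemma snocRepeat_init {c : Fin (n + 2) → Bool} (h : c (last n).castSucc = c (last (n + 1))) :
    snocRepeat (init c) = c := by
  conv_rhs => rw [← snoc_init_self c, ← h]
  rfl

end Fin

open Fin

section Path

variable {k : ℕ}

lemma hasOppositeNeighbor_pathGraph_last_iff (c : Fin (k + 2) → Bool) :
    HasOppositeNeighbor (pathGraph (k + 2)) c (last (k + 1)) ↔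
      c (last k).castSucc ≠ c (last (k + 1)) := by
  refine ⟨fun ⟨u, hu, hne⟩ => ?_, fun h => ⟨_, pathGraph_adj.mpr (by simp), h⟩⟩
  obtain rfl : u = (last k).castSucc := by
    rw [pathGraph_adj] at hu
    ext
    simp only [val_last, val_castSucc] at hu ⊢
    omega
  exact hne

lemma hasOppositeNeighbor_pathGraph_castSucc_iff (c : Fin (k + 2) → Bool) (v : Fin (k + 1)) :
    HasOppositeNeighbor (pathGraph (k + 2)) c v.castSucc ↔
      HasOppositeNeighbor (pathGraph (k + 1)) (init c) v ∨
        v = last k ∧ c (last k).castSucc ≠ c (last (k + 1)) := by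
  constructor
  · rintro ⟨u, hu, hne⟩
    rcases eq_castSucc_or_eq_last u with ⟨w, rfl⟩ | rfl
    · exact Or.inl ⟨w, by simpa [pathGraph_adj] using hu, hne⟩
    · obtain rfl : v = last k := by
        rw [pathGraph_adj] at hu
        ext
        simp only [val_last, val_castSucc] at hu ⊢
        omega
      exact Or.inr ⟨rfl, hne.symm⟩
  · rintro (⟨w, hw, hne⟩ | ⟨rfl, hne⟩)
    · exact ⟨w.castSucc, by simpa [pathGraph_adj] using hw, hne⟩
    · exact ⟨last _, pathGraph_adj.mpr (by simp), hne.symm⟩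

theorem isDomaticTwoColoring_pathGraph_iff (c : Fin (k + 2) → Bool) :
    IsDomaticTwoColoring (pathGraph (k + 2)) c ↔
      c (last k).castSucc ≠ c (last (k + 1)) ∧
        ∀ v, v ≠ last k → HasOppositeNeighbor (pathGraph (k + 1)) (init c) v := by
  rw [IsDomaticTwoColoring, forall_fin_succ', hasOppositeNeighbor_pathGraph_last_iff]
  simp only [hasOppositeNeighbor_pathGraph_castSucc_iff]
  constructor
  · rintro ⟨h, hlast⟩
    exact ⟨hlast, fun v hv => (h v).resolve_right fun h' => hv h'.1⟩
  · rintro ⟨hlast, h⟩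
    refine ⟨fun v => ?_, hlast⟩
    by_cases hv : v = last k
    exacts [Or.inr ⟨hv, hlast⟩, Or.inl (h v hv)]

lemma isDomaticTwoColoring_snocFlip_iff (d : Fin (k + 1) → Bool) :
    IsDomaticTwoColoring (pathGraph (k + 2)) (snocFlip d) ↔
      ∀ v, v ≠ last k → HasOppositeNeighbor (pathGraph (k + 1)) d v := by
  simp [isDomaticTwoColoring_pathGraph_iff, snocFlip]

lemma not_hasOppositeNeighbor_snocRepeat_last (d : Fin (k + 1) → Bool) :
    ¬ HasOppositeNeighbor (pathGraph (k + 2)) (snocRepeat d) (last (k + 1)) := by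
  simp [hasOppositeNeighbor_pathGraph_last_iff, snocRepeat]

lemma forall_ne_last_hasOppositeNeighbor_snocRepeat_iff (d : Fin (k + 1) → Bool) :
    (∀ w, w ≠ last (k + 1) → HasOppositeNeighbor (pathGraph (k + 2)) (snocRepeat d) w) ↔
      IsDomaticTwoColoring (pathGraph (k + 1)) d := by
  have key (v : Fin (k + 1)) :
      HasOppositeNeighbor (pathGraph (k + 2)) (snocRepeat d) v.castSucc ↔
        HasOppositeNeighbor (pathGraph (k + 1)) d v := by
    simp [hasOppositeNeighbor_pathGraph_castSucc_iff, snocRepeat]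
  refine ⟨fun h v => (key v).mp (h _ (castSucc_ne_last v)), fun h w hw => ?_⟩
  obtain ⟨v, rfl⟩ := exists_castSucc_eq.mpr hw
  exact (key v).mpr (h v)

lemma init_mem_domaticTwoColorings_pathGraph {c : Fin (k + 3) → Bool}
    (hc : c ∈ domaticTwoColorings (pathGraph (k + 3)) 0)
    (hlast : HasOppositeNeighbor (pathGraph (k + 2)) (init c) (last (k + 1))) :
    init c ∈ domaticTwoColorings (pathGraph (k + 2)) 0 := by
  refine ⟨by simpa using hc.1, fun w => ?_⟩
  by_cases hw : w = last (k + 1)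
  · exact hw ▸ hlast
  · exact ((isDomaticTwoColoring_pathGraph_iff c).mp hc.2).2 w hw

lemma bijOn_snocFlip_domaticTwoColorings_pathGraph :
    Set.BijOn snocFlip (domaticTwoColorings (pathGraph (k + 2)) 0)
      (domaticTwoColorings (pathGraph (k + 3)) 0 ∩
        {c | HasOppositeNeighbor (pathGraph (k + 2)) (init c) (last (k + 1))}) := by
  refine Set.InvOn.bijOn (f' := init) ⟨fun d _ => init_snocFlip d,
    fun c hc => snocFlip_init ((isDomaticTwoColoring_pathGraph_iff c).mp hc.1.2).1⟩ ?_ ?_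
  · rintro d ⟨hd₀, hd⟩
    refine ⟨⟨by simpa using hd₀, (isDomaticTwoColoring_snocFlip_iff d).mpr fun v _ => hd v⟩,
      ?_⟩
    simpa using hd (last (k + 1))
  · rintro c ⟨hc, hlast⟩
    exact init_mem_domaticTwoColorings_pathGraph hc hlast

lemma bijOn_snocFlip_snocRepeat_domaticTwoColorings_pathGraph :
    Set.BijOn (snocFlip ∘ snocRepeat) (domaticTwoColorings (pathGraph (k + 1)) 0)
      (domaticTwoColorings (pathGraph (k + 3)) 0 \
        {c | HasOppositeNeighbor (pathGraph (k + 2)) (init c) (last (k + 1))}) := by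
  have hrepeat (c : Fin (k + 3) → Bool)
      (hlast : ¬ HasOppositeNeighbor (pathGraph (k + 2)) (init c) (last (k + 1))) :
      snocRepeat (init (init c)) = init c :=
    snocRepeat_init (not_not.mp (mt (hasOppositeNeighbor_pathGraph_last_iff _).mpr hlast))
  refine Set.InvOn.bijOn (f' := init ∘ init)
    ⟨fun d _ => by simp, fun c ⟨hc, hlast⟩ => ?_⟩ ?_ ?_
  · rw [Function.comp_apply, Function.comp_apply, hrepeat c hlast,
      snocFlip_init ((isDomaticTwoColoring_pathGraph_iff c).mp hc.2).1]
  · rintro d ⟨hd₀, hd⟩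
    refine ⟨⟨by simpa using hd₀, (isDomaticTwoColoring_snocFlip_iff _).mpr
      ((forall_ne_last_hasOppositeNeighbor_snocRepeat_iff d).mpr hd)⟩, ?_⟩
    simpa using not_hasOppositeNeighbor_snocRepeat_last d
  · rintro c ⟨hc, hlast⟩
    refine ⟨by simpa using hc.1, ?_⟩
    rw [← forall_ne_last_hasOppositeNeighbor_snocRepeat_iff, Function.comp_apply, hrepeat c hlast]
    exact ((isDomaticTwoColoring_pathGraph_iff c).mp hc.2).2

theorem ncard_domaticTwoColorings_pathGraph_add_three :
    (domaticTwoColorings (pathGraph (k + 3)) 0).ncard =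
      (domaticTwoColorings (pathGraph (k + 2)) 0).ncard +
        (domaticTwoColorings (pathGraph (k + 1)) 0).ncard := by
  rw [← Set.ncard_inter_add_ncard_sdiff_eq_ncard _
      {c | HasOppositeNeighbor (pathGraph (k + 2)) (init c) (last (k + 1))},
    ← bijOn_snocFlip_domaticTwoColorings_pathGraph.ncard_eq,
    ← bijOn_snocFlip_snocRepeat_domaticTwoColorings_pathGraph.ncard_eq]

end Path

lemma domaticTwoColorings_pathGraph_one : domaticTwoColorings (pathGraph 1) 0 = ∅ := by
  refine Set.eq_empty_of_forall_notMem fun c ⟨_, hc⟩ => ?_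
  obtain ⟨u, hu, -⟩ := hc 0
  simp [pathGraph_adj] at hu

lemma ncard_domaticTwoColorings_pathGraph_two :
    (domaticTwoColorings (pathGraph 2) 0).ncard = 1 := by
  refine Set.ncard_eq_one.mpr ⟨snocFlip fun _ => true,
    Set.eq_singleton_iff_unique_mem.mpr ⟨⟨by simp, ?_⟩, ?_⟩⟩
  · exact (isDomaticTwoColoring_snocFlip_iff _).mpr fun v hv =>
      absurd (Subsingleton.elim (α := Fin 1) _ _) hv
  · rintro c ⟨hc₀, hc⟩
    rw [← snocFlip_init ((isDomaticTwoColoring_pathGraph_iff c).mp hc).1]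
    congr
    funext v
    rw [Subsingleton.elim (α := Fin 1) v 0]
    exact hc₀

theorem ncard_domaticTwoColorings_pathGraph (k : ℕ) :
    (domaticTwoColorings (pathGraph (k + 1)) 0).ncard = Nat.fib k := by
  induction k using Nat.twoStepInduction with
  | zero => simp [domaticTwoColorings_pathGraph_one]
  | one => exact ncard_domaticTwoColorings_pathGraph_two
  | more k ih₀ ih₁ =>
    rw [ncard_domaticTwoColorings_pathGraph_add_three, ih₀, ih₁, Nat.fib_add_two, add_comm]

theorem dp_pathGraph_two (k : ℕ) : dp (pathGraph (k + 1)) 2 = Nat.fib k := by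
  rw [dp_two_eq_ncard_domaticTwoColorings _ 0, ncard_domaticTwoColorings_pathGraph]

/-- The number of 2-part domatic partitions of the path `P_n` satisfies the
Fibonacci recurrence `dp(P_n,2) = dp(P_{n-1},2) + dp(P_{n-2},2)` for `n ≥ 4`,
with initial values `dp(P_2,2) = dp(P_3,2) = 1`. -/
theorem dp_path_fib_recurrence :
    dp (SimpleGraph.pathGraph 2) 2 = 1 ∧
      dp (SimpleGraph.pathGraph 3) 2 = 1 ∧
      ∀ n : ℕ, 4 ≤ n →
        dp (SimpleGraph.pathGraph n) 2 =
          dp (SimpleGraph.pathGraph (n - 1)) 2 +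
            dp (SimpleGraph.pathGraph (n - 2)) 2 := by
  refine ⟨by simpa using dp_pathGraph_two 1, by simpa using dp_pathGraph_two 2, fun n _ => ?_⟩
  obtain ⟨k, rfl⟩ : ∃ k, n = k + 3 := ⟨n - 3, by omega⟩
  rw [show k + 3 - 1 = k + 2 by omega, show k + 3 - 2 = k + 1 by omega, dp_pathGraph_two,
    dp_pathGraph_two, dp_pathGraph_two, Nat.fib_add_two, add_comm]
end

section
/- For every integer n ≥ 2, the corona P_n ∘ K_1 (obtained from the path P_n by attaching one new pendant leaf to each vertex) has exactly 2^{n-1} domatic partitions with 2 parts, and its domatic number is 2; equivalently DP(P_n ∘ K_1, x) = x + 2^{n-1}x². -/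
/-- The corona `G ∘ K₁`: attach one new pendant leaf `Sum.inr v` to each
vertex `Sum.inl v` of `G`. -/
def coronaK1 {V : Type*} (G : SimpleGraph V) : SimpleGraph (V ⊕ V) where
  Adj a b :=
    match a, b with
    | Sum.inl u, Sum.inl v => G.Adj u v
    | Sum.inl u, Sum.inr v => u = v
    | Sum.inr u, Sum.inl v => u = v
    | Sum.inr _, Sum.inr _ => False
  symm := by
    constructor
    rintro (u | u) (v | v) h <;> simp_all [SimpleGraph.adj_comm]
  loopless := by
    constructor
    rintro (u | u) h <;> simp_all

namespace Setoid

variable {α : Type*}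

theorem isPartition_pair_compl_s11 {s : Set α} (hs : s.Nonempty) (hsc : sᶜ.Nonempty) :
    IsPartition ({s, sᶜ} : Set (Set α)) := by
  refine ⟨?_, fun a => ?_⟩
  · rintro (h | h)
    exacts [hs.ne_empty h.symm, hsc.ne_empty h.symm]
  · by_cases ha : a ∈ s
    · refine ⟨s, ⟨Or.inl rfl, ha⟩, ?_⟩
      rintro t ⟨rfl | rfl, hat⟩
      exacts [rfl, absurd ha hat]
    · refine ⟨sᶜ, ⟨Or.inr rfl, ha⟩, ?_⟩
      rintro t ⟨rfl | rfl, hat⟩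
      exacts [absurd hat ha, rfl]

theorem IsPartition.eq_compl_of_pair_s11 {s t : Set α} (hc : IsPartition ({s, t} : Set (Set α)))
    (hst : s ≠ t) : t = sᶜ := by
  ext a
  refine ⟨fun hat has => hst (eq_of_mem_eqv_class hc.2 (Or.inl rfl) has (Or.inr rfl) hat),
    fun has => ?_⟩
  obtain ⟨u, ⟨rfl | rfl, hau⟩, -⟩ := hc.2 a
  exacts [absurd hau has, hau]

theorem IsPartition.ncard_le_two {c : Set (Set α)} (hc : IsPartition c) {x y : α}
    (h : ∀ s ∈ c, x ∈ s ∨ y ∈ s) : c.ncard ≤ 2 := by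
  obtain ⟨sx, ⟨hsx, hx⟩, -⟩ := hc.2 x
  obtain ⟨sy, ⟨hsy, hy⟩, -⟩ := hc.2 y
  have hsub : c ⊆ {sx, sy} := fun s hs => (h s hs).imp
    (fun hxs => eq_of_mem_eqv_class hc.2 hs hxs hsx hx)
    (fun hys => eq_of_mem_eqv_class hc.2 hs hys hsy hy)
  calc c.ncard ≤ ({sx, sy} : Set (Set α)).ncard := Set.ncard_le_ncard hsub (Set.toFinite _)
    _ ≤ 2 := (Set.ncard_insert_le _ _).trans (by simp)

end Setoid

theorem Set.ncard_setOf_apply_eq {α β : Type*} [Fintype α] [DecidableEq α] [Fintype β]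
    [DecidableEq β] (a : α) (b : β) :
    {f : α → β | f a = b}.ncard = Fintype.card β ^ (Fintype.card α - 1) := by
  have := Fintype.card_filter_piFinset_const_eq_of_mem Finset.univ a (Finset.mem_univ b)
  rw [Set.ncard_eq_toFinset_card', Set.toFinset_ofPred]
  simpa using this

variable {V : Type*} {G : SimpleGraph V}

@[simp]
theorem coronaK1_adj_inr {v : V} {x : V ⊕ V} :
    (coronaK1 G).Adj (Sum.inr v) x ↔ x = Sum.inl v := by
  cases x <;> simp [coronaK1, eq_comm]

theorem IsDominating.inl_mem_or_inr_mem_coronaK1 {S : Set (V ⊕ V)}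
    (hS : IsDominating (coronaK1 G) S) (v : V) : Sum.inl v ∈ S ∨ Sum.inr v ∈ S := by
  refine or_iff_not_imp_right.2 fun hv => ?_
  obtain ⟨u, hu, hadj⟩ := hS _ hv
  rwa [coronaK1_adj_inr.1 hadj] at hu

theorem IsDominating.nonempty_coronaK1 [Nonempty V] {S : Set (V ⊕ V)}
    (hS : IsDominating (coronaK1 G) S) : S.Nonempty :=
  (hS.inl_mem_or_inr_mem_coronaK1 (Classical.arbitrary V)).elim (⟨_, ·⟩) (⟨_, ·⟩)

theorem IsDomaticPartition.ncard_le_two_coronaK1 [Nonempty V] {P : Set (Set (V ⊕ V))}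
    (hP : IsDomaticPartition (coronaK1 G) P) : P.ncard ≤ 2 :=
  hP.1.ncard_le_two fun S hS => (hP.2 S hS).inl_mem_or_inr_mem_coronaK1 (Classical.arbitrary V)

def coronaTransversal (f : V → Bool) : Set (V ⊕ V) :=
  {x | Sum.elim f (fun v => !f v) x}

@[simp]
theorem inl_mem_coronaTransversal {f : V → Bool} {v : V} :
    Sum.inl v ∈ coronaTransversal f ↔ f v = true :=
  Iff.rfl

@[simp]
theorem inr_mem_coronaTransversal {f : V → Bool} {v : V} :
    Sum.inr v ∈ coronaTransversal f ↔ f v = false := by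
  simp [coronaTransversal]

theorem compl_coronaTransversal (f : V → Bool) :
    (coronaTransversal f)ᶜ = coronaTransversal (fun v => !f v) := by
  ext (v | v) <;> simp

theorem coronaTransversal_injective : Function.Injective (coronaTransversal (V := V)) :=
  fun f g h => funext fun v => by
    simpa using congrArg (Sum.inl v ∈ ·) h

theorem isDominating_coronaTransversal (f : V → Bool) :
    IsDominating (coronaK1 G) (coronaTransversal f) := by
  rintro (v | v) hv
  · exact ⟨Sum.inr v, by simpa using hv, rfl⟩
  · exact ⟨Sum.inl v, by simpa using hv, rfl⟩

theorem IsDominating.exists_eq_coronaTransversal {S : Set (V ⊕ V)}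
    (hS : IsDominating (coronaK1 G) S) (hSc : IsDominating (coronaK1 G) Sᶜ) :
    ∃ f : V → Bool, S = coronaTransversal f := by
  classical
  refine ⟨fun v => decide (Sum.inl v ∈ S), ?_⟩
  ext (v | v)
  · simp
  · have hv := hS.inl_mem_or_inr_mem_coronaK1 v
    have hvc := hSc.inl_mem_or_inr_mem_coronaK1 v
    simp only [Set.mem_compl_iff, inr_mem_coronaTransversal, decide_eq_false_iff_not] at hvc ⊢
    tauto

theorem isDomaticPartition_coronaTransversal [Nonempty V] (f : V → Bool) :
    IsDomaticPartition (coronaK1 G) {coronaTransversal f, (coronaTransversal f)ᶜ} := by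
  have hdom : ∀ S ∈ ({coronaTransversal f, (coronaTransversal f)ᶜ} : Set (Set (V ⊕ V))),
      IsDominating (coronaK1 G) S := by
    rintro S (rfl | rfl)
    · exact isDominating_coronaTransversal f
    · rw [compl_coronaTransversal]
      exact isDominating_coronaTransversal _
  exact ⟨Setoid.isPartition_pair_compl_s11 (hdom _ (Or.inl rfl)).nonempty_coronaK1
    (hdom _ (Or.inr rfl)).nonempty_coronaK1, hdom⟩

theorem ncard_pair_coronaTransversal [Nonempty V] (f : V → Bool) :
    ({coronaTransversal f, (coronaTransversal f)ᶜ} : Set (Set (V ⊕ V))).ncard = 2 :=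
  Set.ncard_pair ne_compl_self

theorem IsDomaticPartition.exists_eq_coronaTransversal {P : Set (Set (V ⊕ V))}
    (hP : IsDomaticPartition (coronaK1 G) P) (h2 : P.ncard = 2) (v : V) :
    ∃ f : V → Bool, f v = true ∧ P = {coronaTransversal f, (coronaTransversal f)ᶜ} := by
  obtain ⟨A, B, hAB, rfl⟩ := Set.ncard_eq_two.1 h2
  obtain rfl := hP.1.eq_compl_of_pair_s11 hAB
  obtain ⟨f, rfl⟩ := (hP.2 A (Or.inl rfl)).exists_eq_coronaTransversal (hP.2 Aᶜ (Or.inr rfl))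
  cases hv : f v
  · refine ⟨fun v => !f v, by simp [hv], ?_⟩
    rw [compl_coronaTransversal, compl_coronaTransversal, Set.pair_comm]
    simp only [Bool.not_not]
  · exact ⟨f, hv, rfl⟩

theorem dp_coronaK1_two [Fintype V] [Nonempty V] (G : SimpleGraph V) :
    dp (coronaK1 G) 2 = 2 ^ (Fintype.card V - 1) := by
  classical
  obtain ⟨v⟩ := ‹Nonempty V›
  let pair (f : V → Bool) : Set (Set (V ⊕ V)) :=
    {coronaTransversal f, (coronaTransversal f)ᶜ}
  have hset : {P | IsDomaticPartition (coronaK1 G) P ∧ P.ncard = 2} =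
      pair '' {f | f v = true} := by
    ext P
    constructor
    · rintro ⟨hP, h2⟩
      obtain ⟨f, hf, rfl⟩ := hP.exists_eq_coronaTransversal h2 v
      exact ⟨f, hf, rfl⟩
    · rintro ⟨f, -, rfl⟩
      exact ⟨isDomaticPartition_coronaTransversal f, ncard_pair_coronaTransversal f⟩
  have hinj : Set.InjOn pair {f | f v = true} := by
    intro f hf g hg h
    apply coronaTransversal_injective
    obtain heq | hcompl : coronaTransversal f ∈ pair g := h ▸ Or.inl rfl
    · exact heq
    · exact absurd hg (hcompl ▸ hf : Sum.inl v ∈ (coronaTransversal g)ᶜ)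
  rw [dp, hset, hinj.ncard_image, Set.ncard_setOf_apply_eq, Fintype.card_bool]

/-- For `n ≥ 2`, the corona `P_n ∘ K₁` has exactly `2^(n-1)` domatic partitions
with two parts, and its domatic number is `2`; equivalently
`DP(P_n ∘ K₁, x) = x + 2^(n-1) x²`. -/
theorem dp_corona_path (n : ℕ) (hn : 2 ≤ n) :
    dp (coronaK1 (SimpleGraph.pathGraph n)) 2 = 2 ^ (n - 1) ∧
      (∃ P : Set (Set (Fin n ⊕ Fin n)),
        IsDomaticPartition (coronaK1 (SimpleGraph.pathGraph n)) P ∧ P.ncard = 2) ∧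
      (∀ P : Set (Set (Fin n ⊕ Fin n)),
        IsDomaticPartition (coronaK1 (SimpleGraph.pathGraph n)) P → P.ncard ≤ 2) := by
  have : Nonempty (Fin n) := ⟨⟨0, by omega⟩⟩
  exact ⟨by simpa using dp_coronaK1_two (SimpleGraph.pathGraph n),
    ⟨_, isDomaticPartition_coronaTransversal (fun _ => true), ncard_pair_coronaTransversal _⟩,
    fun P hP => hP.ncard_le_two_coronaK1⟩
end

section
/- Let T be a finite tree with at least 4 vertices, let y be a quasi-star vertex of T with ones(y) the set of leaves adjacent to y, and let T₁ be the subgraph induced on V \ ones(y) and T₂ the subgraph induced on V \ (ones(y) ∪ {y}). If c is a weak 2-coloring of T in which y and its unique non-leaf neighbor w receive different colors, then the restriction of c to V \ ones(y) is a weak 2-coloring of T₁; and if y and w receive the same color, then the restriction of c to V \ (ones(y) ∪ {y}) is a weak 2-coloring of T₂. -/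
/-- A weak 2-coloring of `G`: every non-isolated vertex has a neighbor of a
different color. -/
def IsWeak2Coloring {V : Type*} (G : SimpleGraph V) (c : V → Fin 2) : Prop :=
  ∀ v, (∃ u, G.Adj v u) → ∃ u, G.Adj v u ∧ c u ≠ c v


/- A leaf adjacent to `y` has `y` as its only neighbour, so deleting those leaves
changes only the neighbourhood of `y`. If `c y ≠ c w`, then `y` keeps the witness `w`. If
`c y = c w`, then deleting `y` as well also changes the neighbourhood of `w`, but `y` was
never a witness for `w`. -/

namespace SimpleGraph

variable {V : Type*} {G : SimpleGraph V}

theorem eq_of_adj_of_adj_of_degree_eq_one {u v y : V} [Fintype (G.neighborSet u)]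
    (hu : G.degree u = 1) (hvu : G.Adj v u) (hyu : G.Adj y u) : v = y :=
  (degree_eq_one_iff_existsUnique_adj.mp hu).unique hvu.symm hyu.symm

end SimpleGraph

open SimpleGraph

section

variable {V : Type*} {G : SimpleGraph V}

theorem isWeak2Coloring_induce_iff {s : Set V} {c : V → Fin 2} :
    IsWeak2Coloring (G.induce s) (fun v => c v) ↔
      ∀ v ∈ s, (∃ u ∈ s, G.Adj v u) → ∃ u ∈ s, G.Adj v u ∧ c u ≠ c v := by
  simp only [IsWeak2Coloring, Subtype.forall, Subtype.exists, comap_adj,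
    Function.Embedding.coe_subtype, exists_prop]

variable [Fintype V] [DecidableRel G.Adj]

theorem IsWeak2Coloring.exists_adj_ne_not_leaf_of_ne {c : V → Fin 2} (hc : IsWeak2Coloring G c)
    {y v u₀ : V} (hvy : v ≠ y) (hvu₀ : G.Adj v u₀) :
    ∃ u, ¬ (G.Adj y u ∧ G.degree u = 1) ∧ G.Adj v u ∧ c u ≠ c v := by
  obtain ⟨u, hvu, hcu⟩ := hc v ⟨u₀, hvu₀⟩
  exact ⟨u, fun ⟨hyu, hu⟩ => hvy (eq_of_adj_of_adj_of_degree_eq_one hu hvu hyu), hvu, hcu⟩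

theorem IsWeak2Coloring.induce_delete_leaves {c : V → Fin 2} (hc : IsWeak2Coloring G c)
    {y w : V} (hyw : G.Adj y w) (hw : G.degree w ≠ 1) (hcyw : c y ≠ c w) :
    IsWeak2Coloring (G.induce {v | ¬ (G.Adj y v ∧ G.degree v = 1)}) (fun v => c v) := by
  refine isWeak2Coloring_induce_iff.mpr fun v _ ⟨u₀, _, hvu₀⟩ => ?_
  by_cases hvy : v = y
  · subst hvy
    exact ⟨w, fun h => hw h.2, hyw, hcyw.symm⟩
  · exact hc.exists_adj_ne_not_leaf_of_ne hvy hvu₀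

theorem IsWeak2Coloring.induce_delete_leaves_and_center {c : V → Fin 2}
    (hc : IsWeak2Coloring G c) {y w : V}
    (hwUnique : ∀ z, G.Adj y z → G.degree z ≠ 1 → z = w) (hcyw : c y = c w) :
    IsWeak2Coloring (G.induce {v | ¬ (G.Adj y v ∧ G.degree v = 1) ∧ v ≠ y})
      (fun v => c v) := by
  refine isWeak2Coloring_induce_iff.mpr fun v ⟨hv, hvy⟩ ⟨u₀, _, hvu₀⟩ => ?_
  obtain ⟨u, hu, hvu, hcu⟩ := hc.exists_adj_ne_not_leaf_of_ne hvy hvu₀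
  refine ⟨u, ⟨hu, ?_⟩, hvu, hcu⟩
  rintro rfl
  have hvw : v = w := hwUnique v hvu.symm fun h => hv ⟨hvu.symm, h⟩
  exact hcu (hvw ▸ hcyw)

end

theorem weak2Coloring_restrict_quasi_star_general
    {V : Type*} [Fintype V] (G : SimpleGraph V) [DecidableRel G.Adj]
    (y w : V)
    (hw : G.Adj y w ∧ G.degree w ≠ 1)
    (hwUnique : ∀ z, G.Adj y z → G.degree z ≠ 1 → z = w)
    (c : V → Fin 2) (hc : IsWeak2Coloring G c) :
    (c y ≠ c w →
      IsWeak2Coloring (G.induce {v | ¬ (G.Adj y v ∧ G.degree v = 1)})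
        (fun v => c v)) ∧
    (c y = c w →
      IsWeak2Coloring (G.induce {v | ¬ (G.Adj y v ∧ G.degree v = 1) ∧ v ≠ y})
        (fun v => c v)) :=
  ⟨hc.induce_delete_leaves hw.1 hw.2, hc.induce_delete_leaves_and_center hwUnique⟩

/-- Let `T` be a tree on at least 4 vertices, `y` a quasi-star vertex with
unique non-leaf neighbor `w`, and `c` a weak 2-coloring of `T`. If `c y ≠ c w`,
the restriction of `c` to `V \ ones(y)` is a weak 2-coloring of the induced
subgraph `T₁`; if `c y = c w`, the restriction of `c` to `V \ (ones(y) ∪ {y})`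
is a weak 2-coloring of the induced subgraph `T₂`. -/
theorem weak2Coloring_restrict_quasi_star
    {V : Type*} [Fintype V] (G : SimpleGraph V) [DecidableRel G.Adj]
    (hT : G.IsTree) (hn : 4 ≤ Fintype.card V) (y w : V)
    (hw : G.Adj y w ∧ G.degree w ≠ 1)
    (hwUnique : ∀ z, G.Adj y z → G.degree z ≠ 1 → z = w)
    (hleaf : ∃ u, G.Adj y u ∧ G.degree u = 1)
    (c : V → Fin 2) (hc : IsWeak2Coloring G c) :
    (c y ≠ c w →
      IsWeak2Coloring (G.induce {v | ¬ (G.Adj y v ∧ G.degree v = 1)})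
        (fun v => c v)) ∧
    (c y = c w →
      IsWeak2Coloring (G.induce {v | ¬ (G.Adj y v ∧ G.degree v = 1) ∧ v ≠ y})
        (fun v => c v)) :=
  weak2Coloring_restrict_quasi_star_general G y w hw hwUnique c hc
end

section
/- Let T be a finite tree of order n ≥ 4 with a quasi-star vertex y, let ones(y) be the set of leaves adjacent to y, and let T₁ and T₂ be the subgraphs induced on V \ ones(y) and V \ (ones(y) ∪ {y}) respectively. Then every domatic partition of T₁ with 2 parts extends to a domatic partition of T with 2 parts, and every domatic partition of T₂ with 2 parts extends to a domatic partition of T with 2 parts; in particular dp(T,2) ≥ dp(T₁,2) and dp(T,2) ≥ dp(T₂,2). -/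
/-!
Write `L` for the leaves at `y`. A 2-part domatic partition of `T₁ = T - L` extends to `T` by
putting `L` into the part avoiding `y`: a leaf outside that part lies in the part of `y`, its
neighbour. For `T₂ = T - L - y`, fix any vertex `w` of `T₂`; put `y` into the part of `w` and `L`
into the other part. Then `y` is dominated by a leaf whenever it is not in a part, and a leaf is
dominated by `y` whenever it is not in a part. Both extensions are injective, since restricting
the parts back to the smaller vertex set recovers the original partition, so `dp` can only grow.
-/

open Set

theorem Setoid.IsPartition.existsUnique_notMem_of_ncard_eq_two {α : Type*} {P : Set (Set α)}
    (hP : Setoid.IsPartition P) (h2 : P.ncard = 2) (a : α) : ∃! S, S ∈ P ∧ a ∉ S := by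
  obtain ⟨S₁, S₂, hne, rfl⟩ := ncard_eq_two.mp h2
  obtain ⟨S, ⟨hS, haS⟩, huniq⟩ := hP.2 a
  have other : ∀ {T T'}, T ∈ ({S₁, S₂} : Set (Set α)) → T' ∈ ({S₁, S₂} : Set (Set α)) →
      T ≠ T' → a ∈ T → a ∉ T' := fun hT hT' hTT' haT haT' =>
    hTT' ((huniq _ ⟨hT, haT⟩).trans (huniq _ ⟨hT', haT'⟩).symm)
  rcases hS with rfl | rfl
  · refine ⟨S₂, ⟨Or.inr rfl, other (Or.inl rfl) (Or.inr rfl) hne haS⟩, ?_⟩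
    rintro T ⟨rfl | rfl, haT⟩
    exacts [absurd haS haT, rfl]
  · refine ⟨S₁, ⟨Or.inl rfl, other (Or.inr rfl) (Or.inl rfl) hne.symm haS⟩, ?_⟩
    rintro T ⟨rfl | rfl, haT⟩
    exacts [rfl, absurd haS haT]

theorem existsUnique_mem_image_of_existsUnique {α β : Type*} {f : α → β} {P : Set α}
    {p : β → Prop} (h : ∃! a, a ∈ P ∧ p (f a)) : ∃! b, b ∈ f '' P ∧ p b := by
  obtain ⟨a, ⟨ha, hpa⟩, huniq⟩ := h
  refine ⟨f a, ⟨mem_image_of_mem f ha, hpa⟩, ?_⟩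
  rintro _ ⟨⟨a', ha', rfl⟩, hpa'⟩
  rw [huniq a' ⟨ha', hpa'⟩]

namespace SimpleGraph

variable {V : Type*} {G : SimpleGraph V} {U : Set V}

def extendPart (σ : Set U → Set V) (S : Set U) : Set V :=
  Subtype.val '' S ∪ σ S

structure IsDomaticExtension (G : SimpleGraph V) (P : Set (Set U)) (σ : Set U → Set V) :
    Prop where
  subset_compl : ∀ S, σ S ⊆ Uᶜ
  existsUnique : ∀ x ∉ U, ∃! S, S ∈ P ∧ x ∈ σ S
  dominates : ∀ S ∈ P, ∀ x ∉ U, x ∉ σ S → ∃ u ∈ extendPart σ S, G.Adj x u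

def ExtendsDomatically (G : SimpleGraph V) (U : Set V) (k : ℕ) : Prop :=
  ∀ P, IsDomaticPartition (G.induce U) P → P.ncard = k → ∃ σ, IsDomaticExtension G P σ

section extendPart

variable {σ : Set U → Set V} {S : Set U}

theorem preimage_extendPart (hσ : σ S ⊆ Uᶜ) : Subtype.val ⁻¹' extendPart σ S = S := by
  ext a
  simp only [extendPart, mem_preimage, mem_union, Subtype.val_injective.mem_set_image,
    or_iff_left_iff_imp]
  exact fun ha => absurd a.2 (hσ ha)

theorem mem_extendPart_iff_of_notMem {x : V} (hx : x ∉ U) : x ∈ extendPart σ S ↔ x ∈ σ S := by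
  simp only [extendPart, mem_union, or_iff_right_iff_imp]
  rintro ⟨a, -, rfl⟩
  exact absurd a.2 hx

theorem image_preimage_image_extendPart (hσ : ∀ S, σ S ⊆ Uᶜ) (P : Set (Set U)) :
    (Subtype.val ⁻¹' ·) '' (extendPart σ '' P) = P := by
  rw [image_image]
  simp only [preimage_extendPart (hσ _), image_id']

theorem extendPart_injective (hσ : ∀ S, σ S ⊆ Uᶜ) : Function.Injective (extendPart σ) :=
  fun S S' h => by rw [← preimage_extendPart (hσ S), h, preimage_extendPart (hσ S')]

end extendPart

namespace IsDomaticExtension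

variable {P : Set (Set U)} {σ : Set U → Set V}

theorem isDomaticPartition (hσ : IsDomaticExtension G P σ)
    (hP : IsDomaticPartition (G.induce U) P) : IsDomaticPartition G (extendPart σ '' P) := by
  have mem_iff (S : Set U) (a : U) : a.1 ∈ extendPart σ S ↔ a ∈ S := by
    rw [← mem_preimage, preimage_extendPart (hσ.subset_compl S)]
  refine ⟨⟨?_, fun x => existsUnique_mem_image_of_existsUnique ?_⟩, ?_⟩
  · rintro ⟨S, hS, hSe⟩
    obtain ⟨a, ha⟩ := nonempty_iff_ne_empty.mpr fun h => hP.1.1 (h ▸ hS)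
    simpa [hSe] using (mem_iff S a).mpr ha
  · by_cases hx : x ∈ U
    · exact (existsUnique_congr fun S => and_congr_right' (mem_iff S ⟨x, hx⟩)).mpr (hP.1.2 _)
    · exact (existsUnique_congr fun S => and_congr_right' (mem_extendPart_iff_of_notMem hx)).mpr
        (hσ.existsUnique x hx)
  · rintro _ ⟨S, hS, rfl⟩ x hxS
    by_cases hx : x ∈ U
    · obtain ⟨u, huS, hadj⟩ := hP.2 S hS ⟨x, hx⟩ fun h => hxS ((mem_iff S _).mpr h)
      exact ⟨u, (mem_iff S u).mpr huS, hadj⟩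
    · exact hσ.dominates S hS x hx fun h => hxS ((mem_extendPart_iff_of_notMem hx).mpr h)

theorem ncard_image (hσ : IsDomaticExtension G P σ) : (extendPart σ '' P).ncard = P.ncard :=
  ncard_image_of_injective P (extendPart_injective hσ.subset_compl)

end IsDomaticExtension

namespace ExtendsDomatically

variable {k : ℕ}

theorem exists_extension (h : ExtendsDomatically G U k) (P : Set (Set U))
    (hP : IsDomaticPartition (G.induce U) P) (hk : P.ncard = k) :
    ∃ Q : Set (Set V), IsDomaticPartition G Q ∧ Q.ncard = k ∧
      ∀ A ∈ P, ∃ B ∈ Q, Subtype.val '' A ⊆ B := by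
  obtain ⟨σ, hσ⟩ := h P hP hk
  exact ⟨extendPart σ '' P, hσ.isDomaticPartition hP, hσ.ncard_image.trans hk,
    fun A hA => ⟨extendPart σ A, mem_image_of_mem _ hA, subset_union_left⟩⟩

theorem dp_le [Finite V] (h : ExtendsDomatically G U k) : dp (G.induce U) k ≤ dp G k := by
  choose! σ hσ using h
  refine ncard_le_ncard_of_injOn (fun P => extendPart (σ P) '' P) ?_ ?_
  · rintro P ⟨hP, hk⟩
    exact ⟨(hσ P hP hk).isDomaticPartition hP, (hσ P hP hk).ncard_image.trans hk⟩
  · rintro P ⟨hP, hk⟩ P' ⟨hP', hk'⟩ h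
    rw [← image_preimage_image_extendPart (hσ P hP hk).subset_compl P,
      ← image_preimage_image_extendPart (hσ P' hP' hk').subset_compl P']
    exact congrArg _ h

end ExtendsDomatically

variable {L : Set V} {y : V}

theorem extendsDomatically_compl (hL : L ⊆ G.neighborSet y) : ExtendsDomatically G Lᶜ 2 := by
  have hy : y ∈ Lᶜ := fun h => G.irrefl (hL h)
  intro P hP h2
  refine ⟨fun S => {x | x ∈ L ∧ ⟨y, hy⟩ ∉ S}, fun S x hx => not_not.mpr hx.1, ?_, ?_⟩
  · intro x hx
    exact (existsUnique_congr fun S => and_congr_right' (and_iff_right (not_not.mp hx))).mpr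
      (hP.1.existsUnique_notMem_of_ncard_eq_two h2 _)
  · intro S _ x hx hxS
    have hyS : ⟨y, hy⟩ ∈ S := by_contra fun h => hxS ⟨not_not.mp hx, h⟩
    exact ⟨y, Or.inl ⟨_, hyS, rfl⟩, (hL (not_not.mp hx)).symm⟩

theorem extendsDomatically_compl_diff_singleton (hL : L ⊆ G.neighborSet y) (hne : L.Nonempty) :
    ExtendsDomatically G (Lᶜ \ {y}) 2 := by
  intro P hP h2
  obtain ⟨S₀, hS₀⟩ : P.Nonempty := nonempty_of_ncard_ne_zero (by omega)
  obtain ⟨w, -⟩ := nonempty_iff_ne_empty.mpr fun h => hP.1.1 (h ▸ hS₀)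
  obtain ⟨z, hz⟩ := hne
  have hyL : y ∉ L := fun h => G.irrefl (hL h)
  have mem_or_eq : ∀ x ∉ Lᶜ \ {y}, x ∈ L ∨ x = y := by
    intro x hx
    by_contra! h
    exact hx h
  refine ⟨fun S => {x | x ∈ L ∧ w ∉ S} ∪ {x | x = y ∧ w ∈ S}, ?_, ?_, ?_⟩
  · rintro S x (⟨hxL, -⟩ | ⟨rfl, -⟩) ⟨hx, hxy⟩
    exacts [hx hxL, hxy rfl]
  · intro x hx
    rcases mem_or_eq x hx with hxL | rfl
    · have hxy : x ≠ y := fun h => hyL (h ▸ hxL)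
      refine (existsUnique_congr fun S => and_congr_right' ?_).mpr
        (hP.1.existsUnique_notMem_of_ncard_eq_two h2 w)
      simp [hxL, hxy]
    · refine (existsUnique_congr fun S => and_congr_right' ?_).mpr (hP.1.2 w)
      simp [hyL]
  · intro S _ x hx hxS
    rcases mem_or_eq x hx with hxL | rfl
    · have hwS : w ∈ S := by_contra fun h => hxS (Or.inl ⟨hxL, h⟩)
      exact ⟨y, Or.inr (Or.inr ⟨rfl, hwS⟩), (hL hxL).symm⟩
    · have hwS : w ∉ S := fun h => hxS (Or.inr ⟨rfl, h⟩)
      exact ⟨z, Or.inr (Or.inl ⟨hz, hwS⟩), hL hz⟩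

end SimpleGraph

theorem domatic_partition_extends_quasi_star_general
    {V : Type*} [Fintype V] (G : SimpleGraph V) [DecidableRel G.Adj]
    (y : V)
    (hquasi₂ : ∃ u, G.Adj y u ∧ G.degree u = 1) :
    (∀ P : Set (Set {v | ¬ (G.Adj y v ∧ G.degree v = 1)}),
      IsDomaticPartition (G.induce {v | ¬ (G.Adj y v ∧ G.degree v = 1)}) P →
        P.ncard = 2 →
        ∃ Q : Set (Set V), IsDomaticPartition G Q ∧ Q.ncard = 2 ∧
          ∀ A ∈ P, ∃ B ∈ Q, Subtype.val '' A ⊆ B) ∧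
    (∀ P : Set (Set {v | ¬ (G.Adj y v ∧ G.degree v = 1) ∧ v ≠ y}),
      IsDomaticPartition (G.induce {v | ¬ (G.Adj y v ∧ G.degree v = 1) ∧ v ≠ y}) P →
        P.ncard = 2 →
        ∃ Q : Set (Set V), IsDomaticPartition G Q ∧ Q.ncard = 2 ∧
          ∀ A ∈ P, ∃ B ∈ Q, Subtype.val '' A ⊆ B) ∧
    dp (G.induce {v | ¬ (G.Adj y v ∧ G.degree v = 1)}) 2 ≤ dp G 2 ∧
    dp (G.induce {v | ¬ (G.Adj y v ∧ G.degree v = 1) ∧ v ≠ y}) 2 ≤ dp G 2 := by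
  have hL : {v | G.Adj y v ∧ G.degree v = 1} ⊆ G.neighborSet y := fun _ hv => hv.1
  have h₁ := SimpleGraph.extendsDomatically_compl hL
  have h₂ := SimpleGraph.extendsDomatically_compl_diff_singleton hL hquasi₂
  exact ⟨h₁.exists_extension, h₂.exists_extension, h₁.dp_le, h₂.dp_le⟩

/-- Let `T` be a tree of order at least 4 with quasi-star vertex `y` (adjacent
to exactly one non-leaf and to at least one leaf), `T₁` the subgraph induced on
`V \ ones(y)` and `T₂` the one induced on `V \ (ones(y) ∪ {y})`. Every 2-part
domatic partition of `T₁` (resp. `T₂`) extends to a 2-part domatic partition of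
`T`; in particular `dp T 2 ≥ dp T₁ 2` and `dp T 2 ≥ dp T₂ 2`. -/
theorem domatic_partition_extends_quasi_star
    {V : Type*} [Fintype V] (G : SimpleGraph V) [DecidableRel G.Adj]
    (hT : G.IsTree) (hn : 4 ≤ Fintype.card V) (y : V)
    (hquasi₁ : ∃! w, G.Adj y w ∧ G.degree w ≠ 1)
    (hquasi₂ : ∃ u, G.Adj y u ∧ G.degree u = 1) :
    (∀ P : Set (Set {v | ¬ (G.Adj y v ∧ G.degree v = 1)}),
      IsDomaticPartition (G.induce {v | ¬ (G.Adj y v ∧ G.degree v = 1)}) P →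
        P.ncard = 2 →
        ∃ Q : Set (Set V), IsDomaticPartition G Q ∧ Q.ncard = 2 ∧
          ∀ A ∈ P, ∃ B ∈ Q, Subtype.val '' A ⊆ B) ∧
    (∀ P : Set (Set {v | ¬ (G.Adj y v ∧ G.degree v = 1) ∧ v ≠ y}),
      IsDomaticPartition (G.induce {v | ¬ (G.Adj y v ∧ G.degree v = 1) ∧ v ≠ y}) P →
        P.ncard = 2 →
        ∃ Q : Set (Set V), IsDomaticPartition G Q ∧ Q.ncard = 2 ∧
          ∀ A ∈ P, ∃ B ∈ Q, Subtype.val '' A ⊆ B) ∧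
    dp (G.induce {v | ¬ (G.Adj y v ∧ G.degree v = 1)}) 2 ≤ dp G 2 ∧
    dp (G.induce {v | ¬ (G.Adj y v ∧ G.degree v = 1) ∧ v ≠ y}) 2 ≤ dp G 2 :=
  domatic_partition_extends_quasi_star_general G y hquasi₂
end
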